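/- For any U, X ∈ ℝ^{n×r} with σ_r(X) > 0, dist²(U, X) ≤ (1/(2(√2 − 1)·σ_r(X)²))·‖UUᵀ − XXᵀ‖_F². -/

import Mathlib

open Matrix

noncomputable def vnorm {ι : Type*} [Fintype ι] (v : ι → ℝ) : ℝ :=
  Real.sqrt (∑ i, v i ^ 2)

noncomputable def frob {α β : Type*} [Fintype α] [Fintype β] (M : Matrix α β ℝ) : ℝ :=
  Real.sqrt (∑ i, ∑ j, M i j ^ 2)

noncomputable def sval {α β : Type*} [Fintype α] [Fintype β] (M : Matrix α β ℝ) (k : ℕ) : ℝ :=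
  sSup { t : ℝ | ∃ V : Submodule ℝ (β → ℝ), Module.finrank ℝ V = k ∧
    ∀ v ∈ V, t * vnorm v ≤ vnorm (M.mulVec v) }

noncomputable def opNorm {α β : Type*} [Fintype α] [Fintype β] (M : Matrix α β ℝ) : ℝ :=
  sval M 1

noncomputable def pdist {α ρ : Type*} [Fintype α] [Fintype ρ] [DecidableEq ρ]
    (U X : Matrix α ρ ℝ) : ℝ :=
  sInf { d : ℝ | ∃ R : Matrix ρ ρ ℝ, Rᵀ * R = 1 ∧ d = frob (U - X * R) }

noncomputable def mip {α β : Type*} [Fintype α] [Fintype β] (A B : Matrix α β ℝ) : ℝ :=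
  ∑ i, ∑ j, A i j * B i j

noncomputable def mapA {m : ℕ} {α β : Type*} [Fintype α] [Fintype β]
    (A : Fin m → Matrix α β ℝ) (Z : Matrix α β ℝ) : Fin m → ℝ :=
  fun k => mip (A k) Z

def HasRIP {m n₁ n₂ : ℕ} (A : Fin m → Matrix (Fin n₁) (Fin n₂) ℝ) (s : ℕ) (δ : ℝ) : Prop :=
  ∀ Z : Matrix (Fin n₁) (Fin n₂) ℝ, Z.rank ≤ s →
    (1 - δ) * frob Z ^ 2 ≤ ∑ k, mapA A Z k ^ 2 ∧
      ∑ k, mapA A Z k ^ 2 ≤ (1 + δ) * frob Z ^ 2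

noncomputable def gradU {m n₁ n₂ r : ℕ} (A : Fin m → Matrix (Fin n₁) (Fin n₂) ℝ)
    (M : Matrix (Fin n₁) (Fin n₂) ℝ)
    (U : Matrix (Fin n₁) (Fin r) ℝ) (V : Matrix (Fin n₂) (Fin r) ℝ) :
    Matrix (Fin n₁) (Fin r) ℝ :=
  (∑ k, mip (A k) (U * Vᵀ - M) • (A k * V)) + (1 / 4 : ℝ) • (U * (Uᵀ * U - Vᵀ * V))

noncomputable def gradV {m n₁ n₂ r : ℕ} (A : Fin m → Matrix (Fin n₁) (Fin n₂) ℝ)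
    (M : Matrix (Fin n₁) (Fin n₂) ℝ)
    (U : Matrix (Fin n₁) (Fin r) ℝ) (V : Matrix (Fin n₂) (Fin r) ℝ) :
    Matrix (Fin n₂) (Fin r) ℝ :=
  (∑ k, mip (A k) (U * Vᵀ - M) • ((A k)ᵀ * U)) + (1 / 4 : ℝ) • (V * (Vᵀ * V - Uᵀ * U))

noncomputable def gradg {m n₁ n₂ r : ℕ} (A : Fin m → Matrix (Fin n₁) (Fin n₂) ℝ)
    (M : Matrix (Fin n₁) (Fin n₂) ℝ)
    (U : Matrix (Fin n₁) (Fin r) ℝ) (V : Matrix (Fin n₂) (Fin r) ℝ) :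
    Matrix (Fin n₁ ⊕ Fin n₂) (Fin r) ℝ :=
  Matrix.fromRows (gradU A M U V) (gradV A M U V)

/-!
Rotate `X` by the orthogonal factor `R` of a polar decomposition of `Xᵀ U`, so that for
`Y = X R` and `D = U - Y` the matrix `Yᵀ U = Yᵀ Y + Yᵀ D` is positive semidefinite; in particular
`S = Yᵀ D` is symmetric. With `P = Dᵀ D`, expanding gives
`‖U Uᵀ - Y Yᵀ‖² = 2‖S‖² + ‖P‖² + 2 tr(Yᵀ Y P) + 4 tr(S P)`, where `tr(Yᵀ U P) ≥ 0`,
`tr(S P) ≥ -‖S‖‖P‖` and `tr(Yᵀ Y P) = ‖Y Dᵀ‖² ≥ σ_r(X)² ‖D‖²`. Completing a square bounds the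
right-hand side below by `2(√2 - 1) σ_r(X)² ‖D‖²`, and `dist(U, X) ≤ ‖D‖`.
-/

theorem LinearMap.exists_linearIsometry_comp_eq {𝕜 E V : Type*} [RCLike 𝕜] [AddCommGroup E]
    [Module 𝕜 E] [NormedAddCommGroup V] [InnerProductSpace 𝕜 V] [FiniteDimensional 𝕜 V]
    (f g : E →ₗ[𝕜] V) (h : ∀ x, ‖f x‖ = ‖g x‖) :
    ∃ L : V →ₗᵢ[𝕜] V, L.toLinearMap ∘ₗ g = f := by
  have hker : LinearMap.ker g ≤ LinearMap.ker f := fun x hx =>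
    norm_eq_zero.1 ((h x).trans (by rw [LinearMap.mem_ker.1 hx, norm_zero]))
  let φ : LinearMap.range g →ₗ[𝕜] V :=
    (LinearMap.ker g).liftQ f hker ∘ₗ g.quotKerEquivRange.symm.toLinearMap
  have hφ (x : E) : φ ⟨g x, LinearMap.mem_range_self g x⟩ = f x := by
    rw [LinearMap.comp_apply, LinearEquiv.coe_coe, LinearMap.quotKerEquivRange_symm_apply_image]
    exact Submodule.liftQ_apply _ _ _
  have hφn (y : LinearMap.range g) : ‖φ y‖ = ‖y‖ := by
    obtain ⟨_, x, rfl⟩ := y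
    rw [hφ, h, Submodule.coe_norm]
  let L : LinearMap.range g →ₗᵢ[𝕜] V := ⟨φ, hφn⟩
  refine ⟨L.extend, LinearMap.ext fun x => ?_⟩
  rw [LinearMap.comp_apply, LinearIsometry.coe_toLinearMap]
  exact (L.extend_apply ⟨g x, LinearMap.mem_range_self g x⟩).trans (hφ x)

namespace Matrix

variable {n : Type*} [Fintype n] [DecidableEq n]

theorem toEuclideanCLM_transpose_mul_self (C : Matrix n n ℝ) :
    toEuclideanCLM (n := n) (𝕜 := ℝ) (Cᵀ * C) =
      star (toEuclideanCLM (n := n) (𝕜 := ℝ) C) * toEuclideanCLM (n := n) (𝕜 := ℝ) C := by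
  rw [← conjTranspose_eq_transpose_of_trivial, ← star_eq_conjTranspose, map_mul, map_star]

theorem transpose_mul_self_eq_one_of_norm_map {R : Matrix n n ℝ}
    (hR : ∀ x, ‖toEuclideanCLM (n := n) (𝕜 := ℝ) R x‖ = ‖x‖) : Rᵀ * R = 1 := by
  refine EquivLike.injective (toEuclideanCLM (n := n) (𝕜 := ℝ)) ?_
  rw [toEuclideanCLM_transpose_mul_self, map_one]
  exact (ContinuousLinearMap.norm_map_iff_adjoint_comp_self _).1 hR

open scoped RealInnerProductSpace in
theorem norm_toEuclideanCLM_eq_of_transpose_mul_self_eq {A B : Matrix n n ℝ}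
    (h : Aᵀ * A = Bᵀ * B) (x : EuclideanSpace ℝ n) :
    ‖toEuclideanCLM (n := n) (𝕜 := ℝ) A x‖ = ‖toEuclideanCLM (n := n) (𝕜 := ℝ) B x‖ := by
  have hAB := congrArg (toEuclideanCLM (n := n) (𝕜 := ℝ)) h
  rw [toEuclideanCLM_transpose_mul_self, toEuclideanCLM_transpose_mul_self] at hAB
  rw [ContinuousLinearMap.apply_norm_eq_sqrt_inner_adjoint_left,
    ContinuousLinearMap.apply_norm_eq_sqrt_inner_adjoint_left]
  exact congrArg
    (fun T : EuclideanSpace ℝ n →L[ℝ] EuclideanSpace ℝ n => √(RCLike.re ⟪T x, x⟫)) hAB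

-- Polar decomposition `B = R √(Bᵀ B)`.
open scoped MatrixOrder in
theorem exists_transpose_mul_self_eq_one_and_posSemidef_transpose_mul (B : Matrix n n ℝ) :
    ∃ R : Matrix n n ℝ, Rᵀ * R = 1 ∧ (Rᵀ * B).PosSemidef := by
  set H := CFC.sqrt (Bᵀ * B)
  have hH : H.PosSemidef := (CFC.sqrt_nonneg _).posSemidef
  have hHH : Bᵀ * B = Hᵀ * H := by
    rw [← conjTranspose_eq_transpose_of_trivial H, hH.isHermitian.eq]
    refine (CFC.sqrt_mul_sqrt_self _ ?_).symm
    simpa using (posSemidef_conjTranspose_mul_self B).nonneg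
  obtain ⟨L, hL⟩ := LinearMap.exists_linearIsometry_comp_eq
    (toEuclideanCLM (n := n) (𝕜 := ℝ) B).toLinearMap
    (toEuclideanCLM (n := n) (𝕜 := ℝ) H).toLinearMap
    (norm_toEuclideanCLM_eq_of_transpose_mul_self_eq hHH)
  obtain ⟨R, hR⟩ :=
    EquivLike.surjective (toEuclideanCLM (n := n) (𝕜 := ℝ)) L.toContinuousLinearMap
  have hRR : Rᵀ * R = 1 := transpose_mul_self_eq_one_of_norm_map (by simp [hR])
  have hRH : R * H = B := by
    refine EquivLike.injective (toEuclideanCLM (n := n) (𝕜 := ℝ)) ?_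
    rw [map_mul, hR]
    exact ContinuousLinearMap.coe_injective hL
  refine ⟨R, hRR, ?_⟩
  rwa [← hRH, ← Matrix.mul_assoc, hRR, Matrix.one_mul]

end Matrix

section Frobenius

variable {α β γ : Type*} [Fintype α] [Fintype β] [Fintype γ]

theorem frob_nonneg (A : Matrix α β ℝ) : 0 ≤ frob A := Real.sqrt_nonneg _

theorem frob_sq (A : Matrix α β ℝ) : frob A ^ 2 = ∑ i, ∑ j, A i j ^ 2 :=
  Real.sq_sqrt (Finset.sum_nonneg fun _ _ => Finset.sum_nonneg fun _ _ => sq_nonneg _)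

theorem frob_sq_eq_trace (A : Matrix α β ℝ) : frob A ^ 2 = trace (Aᵀ * A) := by
  rw [frob_sq]
  simp only [trace, diag, mul_apply, transpose_apply, sq]
  exact Finset.sum_comm

theorem frob_transpose (A : Matrix α β ℝ) : frob Aᵀ = frob A := by
  simp only [frob, transpose_apply]
  rw [Finset.sum_comm]

theorem frob_mul_of_transpose_mul_self_eq_one [DecidableEq β] {R : Matrix β β ℝ}
    (hR : Rᵀ * R = 1) (M : Matrix β γ ℝ) : frob (R * M) = frob M := by
  rw [← sq_eq_sq₀ (frob_nonneg _) (frob_nonneg _), frob_sq_eq_trace, frob_sq_eq_trace,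
    transpose_mul, Matrix.mul_assoc, ← Matrix.mul_assoc Rᵀ, hR, Matrix.one_mul]

theorem neg_frob_mul_frob_le_trace_transpose_mul (A B : Matrix α β ℝ) :
    -(frob A * frob B) ≤ trace (Aᵀ * B) := by
  have hCS := Real.sum_mul_le_sqrt_mul_sqrt Finset.univ
    (fun p : α × β => -A p.1 p.2) (fun p : α × β => B p.1 p.2)
  simp only [Fintype.sum_prod_type, neg_mul, Finset.sum_neg_distrib, neg_sq] at hCS
  have htr : trace (Aᵀ * B) = ∑ i, ∑ j, A i j * B i j := by
    simp only [trace, diag, mul_apply, transpose_apply]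
    exact Finset.sum_comm
  rw [htr, frob, frob]
  linarith

theorem frob_mul_transpose_sub_sq (A B : Matrix α β ℝ) :
    frob (A * Aᵀ - B * Bᵀ) ^ 2 =
      trace (Aᵀ * A * (Aᵀ * A)) - 2 * trace (Aᵀ * B * (Bᵀ * A)) +
        trace (Bᵀ * B * (Bᵀ * B)) := by
  have hcyc (C D E F : Matrix α β ℝ) :
      trace (C * Dᵀ * (E * Fᵀ)) = trace (Fᵀ * C * (Dᵀ * E)) := by
    rw [← Matrix.mul_assoc, trace_mul_comm]
    simp only [Matrix.mul_assoc]
  have hsymm : trace (Bᵀ * A * (Aᵀ * B)) = trace (Aᵀ * B * (Bᵀ * A)) := trace_mul_comm _ _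
  rw [frob_sq_eq_trace, transpose_sub, transpose_mul, transpose_mul, transpose_transpose,
    transpose_transpose, sub_mul, mul_sub, mul_sub, trace_sub, trace_sub, trace_sub,
    hcyc A A A A, hcyc A A B B, hcyc B B A A, hcyc B B B B, hsymm]
  ring

end Frobenius

theorem vnorm_nonneg {ι : Type*} [Fintype ι] (v : ι → ℝ) : 0 ≤ vnorm v := Real.sqrt_nonneg _

theorem vnorm_sq {ι : Type*} [Fintype ι] (v : ι → ℝ) : vnorm v ^ 2 = ∑ i, v i ^ 2 :=
  Real.sq_sqrt (Finset.sum_nonneg fun _ _ => sq_nonneg _)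

section SingularValue

variable {α β γ : Type*} [Fintype α] [Fintype β] [Fintype γ]

theorem sval_mul_vnorm_le (X : Matrix α β ℝ) (v : β → ℝ) :
    sval X (Fintype.card β) * vnorm v ≤ vnorm (X *ᵥ v) := by
  rcases (vnorm_nonneg v).eq_or_lt with hv | hv
  · rw [← hv, mul_zero]
    exact vnorm_nonneg _
  rw [← le_div_iff₀ hv]
  refine Real.sSup_le ?_ (div_nonneg (vnorm_nonneg _) hv.le)
  rintro t ⟨V, hV, hVt⟩
  have hVtop : V = ⊤ := Submodule.eq_top_of_finrank_eq (by simp [hV])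
  rw [le_div_iff₀ hv]
  exact hVt v (hVtop ▸ Submodule.mem_top)

theorem frob_sq_eq_sum_vnorm_sq (M : Matrix β γ ℝ) :
    frob M ^ 2 = ∑ j, vnorm (fun i => M i j) ^ 2 := by
  rw [← frob_transpose, frob_sq]
  simp only [vnorm_sq, transpose_apply]

theorem sval_sq_mul_frob_sq_le (X : Matrix α β ℝ) (hX : 0 ≤ sval X (Fintype.card β))
    (M : Matrix β γ ℝ) : sval X (Fintype.card β) ^ 2 * frob M ^ 2 ≤ frob (X * M) ^ 2 := by
  rw [frob_sq_eq_sum_vnorm_sq, frob_sq_eq_sum_vnorm_sq, Finset.mul_sum]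
  refine Finset.sum_le_sum fun j _ => ?_
  rw [← mul_pow]
  exact pow_le_pow_left₀ (mul_nonneg hX (vnorm_nonneg _)) (sval_mul_vnorm_le X _) 2

end SingularValue

section ProcrustesDistance

variable {α ρ : Type*} [Fintype α] [Fintype ρ] [DecidableEq ρ]

theorem pdist_nonneg (U X : Matrix α ρ ℝ) : 0 ≤ pdist U X :=
  Real.sInf_nonneg (by rintro _ ⟨R, -, rfl⟩; exact frob_nonneg _)

theorem pdist_le_frob (U X : Matrix α ρ ℝ) {R : Matrix ρ ρ ℝ} (hR : Rᵀ * R = 1) :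
    pdist U X ≤ frob (U - X * R) :=
  csInf_le ⟨0, by rintro _ ⟨R, -, rfl⟩; exact frob_nonneg _⟩ ⟨R, hR, rfl⟩

end ProcrustesDistance

/- Split `4 c` as `(4 - 2√2) c + 2√2 c`: the weight `2√2` is the largest for which
`2 s² + 2√2 c + p² ≥ (√2 s - p)²` still follows from `c ≥ -s p`, and it leaves `(2√2 - 2) a`. -/
theorem two_mul_sqrt_two_sub_one_mul_le {a c s p : ℝ} (hac : 0 ≤ a + c) (hc : -(s * p) ≤ c) :
    2 * (√2 - 1) * a ≤ 2 * s ^ 2 + p ^ 2 + 2 * a + 4 * c := by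
  have hsqrt : √2 ^ 2 = 2 := Real.sq_sqrt zero_le_two
  have hsqrt_le : √2 ≤ 2 := by nlinarith [Real.sqrt_nonneg 2]
  have hsquare : 0 ≤ 2 * s ^ 2 - 2 * √2 * (s * p) + p ^ 2 := by
    linear_combination sq_nonneg (√2 * s - p) + s ^ 2 * hsqrt
  nlinarith [mul_nonneg (by linarith : (0 : ℝ) ≤ 4 - 2 * √2) hac,
    mul_le_mul_of_nonneg_left hc (by positivity : (0 : ℝ) ≤ 2 * √2)]

theorem two_mul_sqrt_two_sub_one_mul_frob_sq_le {α β : Type*} [Fintype α] [Fintype β]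
    (U Y : Matrix α β ℝ) (hYU : (Yᵀ * U).PosSemidef) :
    2 * (√2 - 1) * frob (Y * (U - Y)ᵀ) ^ 2 ≤ frob (U * Uᵀ - Y * Yᵀ) ^ 2 := by
  obtain ⟨D, rfl⟩ : ∃ D, U = Y + D := ⟨U - Y, (add_sub_cancel Y U).symm⟩
  rw [add_sub_cancel_left]
  set Q := Yᵀ * Y
  set S := Yᵀ * D
  set P := Dᵀ * D
  have hSsymm : Dᵀ * Y = S := by
    have h := hYU.isHermitian.eq
    rw [conjTranspose_eq_transpose_of_trivial, transpose_mul, transpose_transpose, transpose_add,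
      Matrix.add_mul, Matrix.mul_add] at h
    exact add_left_cancel h
  have hSt : Sᵀ = S := by rw [transpose_mul, transpose_transpose, hSsymm]
  have hPt : Pᵀ = P := by rw [transpose_mul, transpose_transpose]
  have hexpand : frob ((Y + D) * (Y + D)ᵀ - Y * Yᵀ) ^ 2 =
      2 * trace (S * S) + trace (P * P) + 2 * trace (Q * P) + 4 * trace (S * P) := by
    have hUU : (Y + D)ᵀ * (Y + D) = Q + S + S + P := by
      rw [transpose_add, Matrix.add_mul, Matrix.mul_add, Matrix.mul_add, hSsymm]; abel
    have hUY : (Y + D)ᵀ * Y = Q + S := by rw [transpose_add, Matrix.add_mul, hSsymm]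
    have hYU' : Yᵀ * (Y + D) = Q + S := Matrix.mul_add _ _ _
    rw [frob_mul_transpose_sub_sq, hUU, hUY, hYU']
    simp only [add_mul, mul_add, trace_add]
    rw [trace_mul_comm S Q, trace_mul_comm P Q, trace_mul_comm P S]
    ring
  have hQP : trace (Q * P) = frob (Y * Dᵀ) ^ 2 := by
    rw [frob_sq_eq_trace, transpose_mul, transpose_transpose, Matrix.mul_assoc D,
      trace_mul_comm D]
    simp only [Q, P, Matrix.mul_assoc]
  have hSP : -(frob S * frob P) ≤ trace (S * P) := by
    simpa only [hSt] using neg_frob_mul_frob_le_trace_transpose_mul S P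
  have hGP : 0 ≤ trace (Q * P) + trace (S * P) := by
    rw [← trace_add, ← Matrix.add_mul, ← Matrix.mul_add, ← Matrix.mul_assoc, trace_mul_comm]
    simpa only [conjTranspose_eq_transpose_of_trivial, Matrix.mul_assoc]
      using (hYU.mul_mul_conjTranspose_same D).trace_nonneg
  have hSS : trace (S * S) = frob S ^ 2 := by rw [frob_sq_eq_trace, hSt]
  have hPP : trace (P * P) = frob P ^ 2 := by rw [frob_sq_eq_trace, hPt]
  rw [hexpand, hSS, hPP, hQP]
  rw [hQP] at hGP
  exact two_mul_sqrt_two_sub_one_mul_le hGP hSP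

/-- Bounding dist²(U, X) by ‖UUᵀ − XXᵀ‖_F². -/
theorem dist_sq_le_frob_diff_sq {n r : ℕ} (U X : Matrix (Fin n) (Fin r) ℝ)
    (h : 0 < sval X r) :
    pdist U X ^ 2 ≤
      (1 / (2 * (Real.sqrt 2 - 1) * sval X r ^ 2)) * frob (U * Uᵀ - X * Xᵀ) ^ 2 := by
  obtain ⟨R, hR, hG⟩ := exists_transpose_mul_self_eq_one_and_posSemidef_transpose_mul (Xᵀ * U)
  set Y := X * R
  have hYU : (Yᵀ * U).PosSemidef := by rwa [transpose_mul, Matrix.mul_assoc]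
  have hXX : X * Xᵀ = Y * Yᵀ := by
    rw [transpose_mul, Matrix.mul_assoc, ← Matrix.mul_assoc R, mul_eq_one_comm.1 hR,
      Matrix.one_mul]
  have hsval : sval X r ^ 2 * frob (U - Y) ^ 2 ≤ frob (Y * (U - Y)ᵀ) ^ 2 := by
    have hRD := sval_sq_mul_frob_sq_le X (by simpa using h.le) (R * (U - Y)ᵀ)
    rwa [Fintype.card_fin, frob_mul_of_transpose_mul_self_eq_one hR, frob_transpose,
      ← Matrix.mul_assoc] at hRD
  have hdist : pdist U X ^ 2 ≤ frob (U - Y) ^ 2 :=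
    pow_le_pow_left₀ (pdist_nonneg U X) (pdist_le_frob U X hR) 2
  have hsqrt : 0 < √2 - 1 := by
    rw [sub_pos, Real.lt_sqrt zero_le_one]
    norm_num
  rw [hXX, one_div_mul_eq_div, le_div_iff₀ (by positivity)]
  calc pdist U X ^ 2 * (2 * (√2 - 1) * sval X r ^ 2)
      ≤ frob (U - Y) ^ 2 * (2 * (√2 - 1) * sval X r ^ 2) := by gcongr
    _ = 2 * (√2 - 1) * (sval X r ^ 2 * frob (U - Y) ^ 2) := by ring
    _ ≤ 2 * (√2 - 1) * frob (Y * (U - Y)ᵀ) ^ 2 := by gcongr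
    _ ≤ frob (U * Uᵀ - Y * Yᵀ) ^ 2 := two_mul_sqrt_two_sub_one_mul_frob_sq_le U Y hYU
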